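/- arXiv:1109.4862 — 4 statements merged into one kernel-verified Lean document; each statement's English description precedes it below -/
import Mathlib

section
/- There exists a monotone G_δ hull operation on P([0,1]) (the class of all subsets of [0,1]) if and only if there exists a monotone G_δ hull operation on L, the class of Lebesgue measurable subsets of [0,1]. -/
/-!
The points of density one of an arbitrary set `A`, computed with outer measure, depend
monotonically on `A`; by the Lebesgue density theorem applied to a measurable hull of `A`,
adding them to `A` yields a measurable set with the same outer measure. So
`A ↦ (A ∪ densityPoints A) ∩ [0,1]` is a monotone measurable hull operation on all subsets
of `[0,1]`, and composing it with a monotone Gδ hull operation on measurable sets gives one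
on all sets.
-/

open MeasureTheory Set

noncomputable section

/-- The class of Lebesgue measurable subsets of `[0,1]` (Lebesgue measurable =
measurable w.r.t. the completion of the Borel σ-algebra, i.e. `NullMeasurableSet`). -/
def LebSets : Set (Set ℝ) := {A | A ⊆ Icc (0:ℝ) 1 ∧ NullMeasurableSet A volume}

/-- The class of all subsets of `[0,1]`. -/
def AllSets : Set (Set ℝ) := {A | A ⊆ Icc (0:ℝ) 1}

/-- `φ` is a monotone hull operation on the class `D ⊆ 𝒫([0,1])`, where the hulls are
required to satisfy the predicate `Good` (e.g. Borel or Gδ). Here `volume` applied to an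
arbitrary set is the Lebesgue outer measure. -/
def IsMonotoneHullOn (D : Set (Set ℝ)) (Good : Set ℝ → Prop) (φ : Set ℝ → Set ℝ) : Prop :=
  (∀ A ∈ D, Good (φ A) ∧ φ A ⊆ Icc (0:ℝ) 1 ∧ A ⊆ φ A ∧ volume (φ A) = volume A) ∧
  ∀ A ∈ D, ∀ A' ∈ D, A ⊆ A' → φ A ⊆ φ A'

open Filter Metric Topology

open scoped ENNReal

section DensityPoints

variable {α : Type*} [MetricSpace α] [MeasurableSpace α]

def densityPoints (μ : Measure α) (A : Set α) : Set α :=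
  {x | 1 ≤ liminf (fun r => μ (A ∩ closedBall x r) / μ (closedBall x r)) (𝓝[>] 0)}

theorem densityPoints_mono (μ : Measure α) : Monotone (densityPoints μ) := by
  intro A B hAB x hx
  refine le_trans (α := ℝ≥0∞) hx (liminf_le_liminf (Eventually.of_forall fun r => ?_))
  exact ENNReal.div_le_div_right (measure_mono (inter_subset_inter_left _ hAB)) _

variable [BorelSpace α] [SecondCountableTopology α] [HasBesicovitchCovering α]
  (μ : Measure α) [IsLocallyFiniteMeasure μ]

theorem union_densityPoints_ae_eq_toMeasurable (A : Set α) :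
    (A ∪ densityPoints μ A : Set α) =ᵐ[μ] toMeasurable μ A := by
  set H := toMeasurable μ A
  -- `A` and its measurable hull `H` have the same measure inside every ball
  have hdensity : ∀ᵐ x ∂μ,
      Tendsto (fun r => μ (A ∩ closedBall x r) / μ (closedBall x r)) (𝓝[>] 0)
        (𝓝 (H.indicator 1 x)) := by
    filter_upwards [Besicovitch.ae_tendsto_measure_inter_div_of_measurableSet μ
      (measurableSet_toMeasurable μ A)] with x hx
    simpa only [Measure.measure_toMeasurable_inter_of_sFinite measurableSet_closedBall] using hx
  rw [eventuallyEq_set]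
  filter_upwards [hdensity] with x hx
  constructor
  · rintro (hxA | hxD)
    · exact subset_toMeasurable μ A hxA
    · by_contra hxH
      rw [indicator_of_notMem hxH] at hx
      have hxD' : (1 : ℝ≥0∞) ≤ 0 := hx.liminf_eq ▸ hxD
      simp at hxD'
  · intro hxH
    rw [indicator_of_mem hxH] at hx
    exact Or.inr hx.liminf_eq.ge

theorem nullMeasurableSet_union_densityPoints (A : Set α) :
    NullMeasurableSet (A ∪ densityPoints μ A) μ :=
  (measurableSet_toMeasurable μ A).nullMeasurableSet.congr
    (union_densityPoints_ae_eq_toMeasurable μ A).symm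

theorem measure_union_densityPoints (A : Set α) : μ (A ∪ densityPoints μ A) = μ A :=
  (measure_congr (union_densityPoints_ae_eq_toMeasurable μ A)).trans (measure_toMeasurable A)

end DensityPoints

theorem IsMonotoneHullOn.mono {D D' : Set (Set ℝ)} {Good : Set ℝ → Prop}
    {φ : Set ℝ → Set ℝ} (hφ : IsMonotoneHullOn D Good φ) (hD' : D' ⊆ D) : IsMonotoneHullOn D' Good φ :=
  ⟨fun A hA => hφ.1 A (hD' hA), fun A hA A' hA' => hφ.2 A (hD' hA) A' (hD' hA')⟩

theorem IsMonotoneHullOn.comp {D D' : Set (Set ℝ)} {Good : Set ℝ → Prop}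
    {φ ψ : Set ℝ → Set ℝ} (hφ : IsMonotoneHullOn D' Good φ)
    (hψ : IsMonotoneHullOn D (· ∈ D') ψ) : IsMonotoneHullOn D Good (φ ∘ ψ) := by
  refine ⟨fun A hA => ?_, fun A hA A' hA' hAA' => ?_⟩
  · obtain ⟨hψA, -, hAψ, hvolψ⟩ := hψ.1 A hA
    obtain ⟨hgood, hsub, hψφ, hvolφ⟩ := hφ.1 _ hψA
    exact ⟨hgood, hsub, hAψ.trans hψφ, hvolφ.trans hvolψ⟩
  · exact hφ.2 _ (hψ.1 A hA).1 _ (hψ.1 A' hA').1 (hψ.2 A hA A' hA' hAA')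

theorem isMonotoneHullOn_measurableHull :
    IsMonotoneHullOn AllSets (· ∈ LebSets)
      (fun A => (A ∪ densityPoints volume A) ∩ Icc 0 1) := by
  refine ⟨fun A (hA : A ⊆ Icc 0 1) => ⟨⟨inter_subset_right, ?_⟩, inter_subset_right,
    subset_inter subset_union_left hA, ?_⟩, fun A _ A' _ hAA' => ?_⟩
  · exact (nullMeasurableSet_union_densityPoints volume A).inter
      measurableSet_Icc.nullMeasurableSet
  · refine le_antisymm ?_ (measure_mono (subset_inter subset_union_left hA))
    exact (measure_mono inter_subset_left).trans (measure_union_densityPoints volume A).le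
  · exact inter_subset_inter_left _ (union_subset_union hAA' (densityPoints_mono volume hAA'))

/-- There is a monotone Gδ hull operation on all subsets of `[0,1]` iff there is one
on the Lebesgue measurable subsets of `[0,1]`. -/
theorem monotone_Gdelta_hull_all_iff_measurable :
    (∃ φ : Set ℝ → Set ℝ, IsMonotoneHullOn AllSets IsGδ φ) ↔
    (∃ φ : Set ℝ → Set ℝ, IsMonotoneHullOn LebSets IsGδ φ) := by
  constructor
  · rintro ⟨φ, hφ⟩
    exact ⟨φ, hφ.mono fun A hA => hA.1⟩
  · rintro ⟨φ, hφ⟩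
    exact ⟨_, hφ.comp isMonotoneHullOn_measurableHull⟩
end
end

section
/- Suppose there exists a monotone map ψ : L → P([0,1]) such that ψ(M) is a G_δ set with λ(M Δ ψ(M)) = 0 for every M ∈ L and M ⊆ M' implies ψ(M) ⊆ ψ(M'), and suppose there exists a monotone G_δ hull operation φ on N satisfying: (1) φ(A ∪ A') ⊆ φ(A) ∪ φ(A') for all A, A' ∈ N, and (2) for every G_δ set G ⊆ [0,1], the set (⋃{φ(A) : A ⊆ G, A ∈ N}) \ G is Lebesgue null. Then there exists a monotone G_δ hull operation φ* on L which extends φ (i.e. φ*(A) = φ(A) for every A ∈ N). -/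
open MeasureTheory Set

noncomputable section

/-- The class of Lebesgue null subsets of `[0,1]`. -/
def NullSets : Set (Set ℝ) := {A | A ⊆ Icc (0:ℝ) 1 ∧ volume A = 0}

/-!
For a non-null measurable `M`, put `G = ψ M` and let `U G` (`nullHullUnion φ G`) be the union of
the hulls `φ A` of the null sets `A ⊆ G`. Define `φ* M = G ∪ φ (U G \ G) ∪ φ (M \ G)`
(`hullAlong φ G M`), and `φ* A = φ A` for null `A`.
Both `U G \ G` and `M \ G` are null, so `φ* M` is a Gδ hull of `M`. For monotonicity the key point
is that the hull of any null `A ⊆ M ∪ U G` lies in `φ* M`: subadditivity splits `φ A` into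
`φ (A ∩ G) ⊆ U G ⊆ G ∪ φ (U G \ G)` and `φ (A \ G) ⊆ φ (M \ G) ∪ φ (U G \ G)`.
-/

lemma mem_nullSets_of_subset {A B : Set ℝ} (hB : B ∈ NullSets) (hAB : A ⊆ B) : A ∈ NullSets :=
  ⟨hAB.trans hB.1, measure_mono_null hAB hB.2⟩

lemma union_mem_nullSets {A B : Set ℝ} (hA : A ∈ NullSets) (hB : B ∈ NullSets) :
    A ∪ B ∈ NullSets :=
  ⟨union_subset hA.1 hB.1, measure_union_null hA.2 hB.2⟩

lemma diff_mem_nullSets_of_symmDiff {M G : Set ℝ} (hM : M ⊆ Icc 0 1)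
    (h : volume (symmDiff M G) = 0) : M \ G ∈ NullSets :=
  ⟨sdiff_subset.trans hM, measure_mono_null subset_union_left h⟩

def nullHullUnion (φ : Set ℝ → Set ℝ) (G : Set ℝ) : Set ℝ :=
  ⋃ A ∈ {A | A ∈ NullSets ∧ A ⊆ G}, φ A

def hullAlong (φ : Set ℝ → Set ℝ) (G M : Set ℝ) : Set ℝ :=
  G ∪ φ (nullHullUnion φ G \ G) ∪ φ (M \ G)

open Classical in
def extendHull (ψ φ : Set ℝ → Set ℝ) (M : Set ℝ) : Set ℝ :=
  if M ∈ NullSets then φ M else hullAlong φ (ψ M) M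

section NullHull

variable {Good : Set ℝ → Prop} {φ : Set ℝ → Set ℝ}

lemma subset_nullHullUnion {A G : Set ℝ} (hA : A ∈ NullSets) (hAG : A ⊆ G) :
    φ A ⊆ nullHullUnion φ G :=
  subset_iUnion₂ (s := fun A _ => φ A) A ⟨hA, hAG⟩

lemma nullHullUnion_mono {G G' : Set ℝ} (h : G ⊆ G') : nullHullUnion φ G ⊆ nullHullUnion φ G' :=
  iUnion₂_mono' fun A hA => ⟨A, ⟨hA.1, hA.2.trans h⟩, subset_rfl⟩

lemma IsMonotoneHullOn.nullHullUnion_subset (hφ : IsMonotoneHullOn NullSets Good φ)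
    (G : Set ℝ) : nullHullUnion φ G ⊆ Icc 0 1 :=
  iUnion₂_subset fun A hA => (hφ.1 A hA.1).2.1

lemma IsMonotoneHullOn.volume_eq_zero (hφ : IsMonotoneHullOn NullSets Good φ) {A : Set ℝ}
    (hA : A ∈ NullSets) : volume (φ A) = 0 :=
  (hφ.1 A hA).2.2.2.trans hA.2

lemma hull_subset_hull_inter_union_hull_diff
    (hsub : ∀ A ∈ NullSets, ∀ A' ∈ NullSets, φ (A ∪ A') ⊆ φ A ∪ φ A')
    {A : Set ℝ} (hA : A ∈ NullSets) (G : Set ℝ) : φ A ⊆ φ (A ∩ G) ∪ φ (A \ G) := by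
  calc φ A = φ (A ∩ G ∪ A \ G) := by rw [inter_union_sdiff]
    _ ⊆ φ (A ∩ G) ∪ φ (A \ G) :=
      hsub _ (mem_nullSets_of_subset hA inter_subset_left) _ (mem_nullSets_of_subset hA sdiff_subset)

variable {G M : Set ℝ}

lemma IsMonotoneHullOn.subset_union_hull_diff (hφ : IsMonotoneHullOn NullSets Good φ)
    (hM : M \ G ∈ NullSets) : M ⊆ G ∪ φ (M \ G) := fun x hx => by
  by_cases hxG : x ∈ G
  · exact Or.inl hxG
  · exact Or.inr ((hφ.1 _ hM).2.2.1 ⟨hx, hxG⟩)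

lemma IsMonotoneHullOn.subset_hullAlong (hφ : IsMonotoneHullOn NullSets Good φ)
    (hM : M \ G ∈ NullSets) : M ⊆ hullAlong φ G M :=
  (hφ.subset_union_hull_diff hM).trans (union_subset_union_left _ subset_union_left)

lemma IsMonotoneHullOn.volume_hullAlong (hφ : IsMonotoneHullOn NullSets Good φ)
    (hU : nullHullUnion φ G \ G ∈ NullSets) (hM : M \ G ∈ NullSets) :
    volume (hullAlong φ G M) = volume G := by
  refine measure_congr ?_
  exact (union_ae_eq_left_of_ae_eq_empty (ae_eq_empty.2 (hφ.volume_eq_zero hM))).trans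
    (union_ae_eq_left_of_ae_eq_empty (ae_eq_empty.2 (hφ.volume_eq_zero hU)))

lemma IsMonotoneHullOn.hull_subset_hullAlong (hφ : IsMonotoneHullOn NullSets Good φ)
    (hsub : ∀ A ∈ NullSets, ∀ A' ∈ NullSets, φ (A ∪ A') ⊆ φ A ∪ φ A')
    (hU : nullHullUnion φ G \ G ∈ NullSets) (hM : M \ G ∈ NullSets)
    {A : Set ℝ} (hA : A ∈ NullSets) (hAM : A ⊆ M ∪ nullHullUnion φ G) :
    φ A ⊆ hullAlong φ G M := by
  have hinter : φ (A ∩ G) ⊆ G ∪ φ (nullHullUnion φ G \ G) :=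
    (subset_nullHullUnion (mem_nullSets_of_subset hA inter_subset_left) inter_subset_right).trans
      (hφ.subset_union_hull_diff hU)
  have hdiff : φ (A \ G) ⊆ φ (M \ G) ∪ φ (nullHullUnion φ G \ G) := by
    refine (hφ.2 _ (mem_nullSets_of_subset hA sdiff_subset) _ (union_mem_nullSets hM hU) ?_).trans
      (hsub _ hM _ hU)
    rw [← union_sdiff_distrib]
    exact sdiff_subset_sdiff_left hAM
  refine (hull_subset_hull_inter_union_hull_diff hsub hA G).trans (union_subset ?_ ?_)
  · exact hinter.trans subset_union_left
  · intro x hx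
    rcases hdiff hx with h | h
    · exact Or.inr h
    · exact Or.inl (Or.inr h)

lemma IsMonotoneHullOn.hullAlong_mono (hφ : IsMonotoneHullOn NullSets Good φ)
    (hsub : ∀ A ∈ NullSets, ∀ A' ∈ NullSets, φ (A ∪ A') ⊆ φ A ∪ φ A') {G' M' : Set ℝ}
    (hU : nullHullUnion φ G \ G ∈ NullSets) (hM : M \ G ∈ NullSets)
    (hU' : nullHullUnion φ G' \ G' ∈ NullSets) (hM' : M' \ G' ∈ NullSets)
    (hG : G ⊆ G') (hMM' : M ⊆ M') : hullAlong φ G M ⊆ hullAlong φ G' M' := by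
  refine union_subset (union_subset ?_ ?_) ?_
  · exact hG.trans (subset_union_left.trans subset_union_left)
  · exact hφ.hull_subset_hullAlong hsub hU' hM' hU
      ((sdiff_subset.trans (nullHullUnion_mono hG)).trans subset_union_right)
  · exact hφ.hull_subset_hullAlong hsub hU' hM' hM
      ((sdiff_subset.trans hMM').trans subset_union_left)

lemma IsMonotoneHullOn.nullHullUnion_diff_mem_nullSets (hφ : IsMonotoneHullOn NullSets Good φ)
    (hvan : ∀ G : Set ℝ, IsGδ G → G ⊆ Icc (0:ℝ) 1 →
      volume ((⋃ A ∈ {A | A ∈ NullSets ∧ A ⊆ G}, φ A) \ G) = 0)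
    (hG : IsGδ G) (hGI : G ⊆ Icc 0 1) : nullHullUnion φ G \ G ∈ NullSets :=
  ⟨sdiff_subset.trans (hφ.nullHullUnion_subset G), hvan G hG hGI⟩

end NullHull

section Extension

variable {ψ φ : Set ℝ → Set ℝ}
  (hψ : ∀ M ∈ LebSets, IsGδ (ψ M) ∧ ψ M ⊆ Icc (0:ℝ) 1 ∧ volume (symmDiff M (ψ M)) = 0)
  (hvan : ∀ G : Set ℝ, IsGδ G → G ⊆ Icc (0:ℝ) 1 →
    volume ((⋃ A ∈ {A | A ∈ NullSets ∧ A ⊆ G}, φ A) \ G) = 0)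
include hψ hvan

lemma IsMonotoneHullOn.extendHull_isHull (hφ : IsMonotoneHullOn NullSets IsGδ φ)
    {M : Set ℝ} (hM : M ∈ LebSets) :
    IsGδ (extendHull ψ φ M) ∧ extendHull ψ φ M ⊆ Icc 0 1 ∧ M ⊆ extendHull ψ φ M ∧
      volume (extendHull ψ φ M) = volume M := by
  by_cases hMn : M ∈ NullSets
  · rw [extendHull, if_pos hMn]
    exact hφ.1 M hMn
  rw [extendHull, if_neg hMn]
  obtain ⟨hGδ, hψI, hψM⟩ := hψ M hM
  have hU := hφ.nullHullUnion_diff_mem_nullSets hvan hGδ hψI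
  have hMψ := diff_mem_nullSets_of_symmDiff hM.1 hψM
  refine ⟨(hGδ.union (hφ.1 _ hU).1).union (hφ.1 _ hMψ).1,
    union_subset (union_subset hψI (hφ.1 _ hU).2.1) (hφ.1 _ hMψ).2.1,
    hφ.subset_hullAlong hMψ, ?_⟩
  rw [hφ.volume_hullAlong hU hMψ]
  exact measure_congr (measure_symmDiff_eq_zero_iff.1 hψM).symm

lemma IsMonotoneHullOn.extendHull_mono (hφ : IsMonotoneHullOn NullSets IsGδ φ)
    (hψmono : ∀ M ∈ LebSets, ∀ M' ∈ LebSets, M ⊆ M' → ψ M ⊆ ψ M')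
    (hsub : ∀ A ∈ NullSets, ∀ A' ∈ NullSets, φ (A ∪ A') ⊆ φ A ∪ φ A')
    {M M' : Set ℝ} (hM : M ∈ LebSets) (hM' : M' ∈ LebSets) (hMM' : M ⊆ M') :
    extendHull ψ φ M ⊆ extendHull ψ φ M' := by
  have hU {N : Set ℝ} (hN : N ∈ LebSets) : nullHullUnion φ (ψ N) \ ψ N ∈ NullSets :=
    hφ.nullHullUnion_diff_mem_nullSets hvan (hψ N hN).1 (hψ N hN).2.1
  have hMψ {N : Set ℝ} (hN : N ∈ LebSets) : N \ ψ N ∈ NullSets :=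
    diff_mem_nullSets_of_symmDiff hN.1 (hψ N hN).2.2
  by_cases hM'n : M' ∈ NullSets
  · have hMn : M ∈ NullSets := mem_nullSets_of_subset hM'n hMM'
    rw [extendHull, extendHull, if_pos hMn, if_pos hM'n]
    exact hφ.2 M hMn M' hM'n hMM'
  rw [extendHull, extendHull, if_neg hM'n]
  split_ifs with hMn
  · exact hφ.hull_subset_hullAlong hsub (hU hM') (hMψ hM') hMn (hMM'.trans subset_union_left)
  · exact hφ.hullAlong_mono hsub (hU hM) (hMψ hM) (hU hM') (hMψ hM')
      (hψmono M hM M' hM' hMM') hMM'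

end Extension

/-- Suppose `ψ : L → 𝒫([0,1])` is monotone, with `ψ(M)` a Gδ set and `λ(M Δ ψ(M)) = 0`,
and suppose `φ` is a monotone Gδ hull operation on `N` which is subadditive and such
that for every Gδ set `G ⊆ [0,1]` the union of `φ(A)` over all null `A ⊆ G` exceeds `G`
only by a null set. Then `φ` extends to a monotone Gδ hull operation `φ*` on `L`. -/
theorem monotone_Gdelta_hull_on_measurable_of_lifting_and_nice_null_hull
    (ψ : Set ℝ → Set ℝ)
    (hψ : ∀ M ∈ LebSets, IsGδ (ψ M) ∧ ψ M ⊆ Icc (0:ℝ) 1 ∧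
      volume (symmDiff M (ψ M)) = 0)
    (hψmono : ∀ M ∈ LebSets, ∀ M' ∈ LebSets, M ⊆ M' → ψ M ⊆ ψ M')
    (φ : Set ℝ → Set ℝ)
    (hφ : IsMonotoneHullOn NullSets IsGδ φ)
    (hsub : ∀ A ∈ NullSets, ∀ A' ∈ NullSets, φ (A ∪ A') ⊆ φ A ∪ φ A')
    (hvan : ∀ G : Set ℝ, IsGδ G → G ⊆ Icc (0:ℝ) 1 →
      volume ((⋃ A ∈ {A | A ∈ NullSets ∧ A ⊆ G}, φ A) \ G) = 0) :
    ∃ φs : Set ℝ → Set ℝ, IsMonotoneHullOn LebSets IsGδ φs ∧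
      ∀ A ∈ NullSets, φs A = φ A :=
  ⟨extendHull ψ φ,
    ⟨fun _ hM => hφ.extendHull_isHull hψ hvan hM,
      fun _ hM _ hM' hMM' => hφ.extendHull_mono hψ hvan hψmono hsub hM hM' hMM'⟩,
    fun _ hA => if_pos hA⟩
end
end

section
/- Let ξ be an ordinal with ξ ≤ add(N) (identifying the cardinal add(N) with its initial ordinal), and let (M_α)_{α<ξ} be subsets of [0,1] with M_α ⊆ M_β whenever α ≤ β < ξ. Then there exists a family (A_α)_{α<ξ} of G_δ subsets of [0,1] such that A_α is a hull of M_α for every α < ξ (i.e. M_α ⊆ A_α and λ*(A_α) = λ*(M_α)) and A_α ⊆ A_β whenever α ≤ β < ξ. -/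
open MeasureTheory Set

noncomputable section

/-- `add(N)`: the least cardinality of a family of null subsets of `[0,1]` whose union
is not null. -/
def addNull : Cardinal :=
  sInf { c | ∃ F : Set (Set ℝ), (∀ A ∈ F, A ∈ NullSets) ∧ volume (⋃₀ F) ≠ 0 ∧
    c = Cardinal.mk F }

/-!
Build the hulls by transfinite recursion: `A α` is a Gδ hull `H` of `M α` together with a Gδ hull
of `(⋃ β < α, A β) \ H`, cut down to `[0,1]`; this family is increasing by construction. For
`β < α` we have `M β ⊆ M α ⊆ H` and `A β` is a hull of `M β`, so `A β \ H` is null. There are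
fewer than `add(N)` such pieces, so their union is null, and adding its hull to `H` does not
change the measure: `A α` is still a hull of `M α`.
-/

section GδHull

variable {X : Type*} [TopologicalSpace X] [MeasurableSpace X]

theorem exists_isGδ_superset_measure_eq (μ : Measure X) [μ.OuterRegular] (S : Set X) :
    ∃ H, IsGδ H ∧ S ⊆ H ∧ μ H = μ S := by
  have hU (n : ℕ) : ∃ U, U ⊇ S ∧ IsOpen U ∧ μ U ≤ μ S + (n : ENNReal)⁻¹ :=
    S.exists_isOpen_le_add μ (ENNReal.inv_ne_zero.2 (ENNReal.natCast_ne_top n))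
  choose U hSU hUo hμU using hU
  have hSH : S ⊆ ⋂ n, U n := subset_iInter hSU
  refine ⟨⋂ n, U n, .iInter fun n => (hUo n).isGδ, hSH, le_antisymm ?_ (measure_mono hSH)⟩
  have hlim := tendsto_const_nhds (x := μ S).add ENNReal.tendsto_inv_nat_nhds_zero
  rw [add_zero] at hlim
  exact ge_of_tendsto' hlim fun n => (measure_mono (iInter_subset U n)).trans (hμU n)

def gδHull (μ : Measure X) [μ.OuterRegular] (S : Set X) : Set X :=
  (exists_isGδ_superset_measure_eq μ S).choose

variable (μ : Measure X) [μ.OuterRegular] (S : Set X)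

theorem isGδ_gδHull : IsGδ (gδHull μ S) :=
  (exists_isGδ_superset_measure_eq μ S).choose_spec.1

theorem subset_gδHull : S ⊆ gδHull μ S :=
  (exists_isGδ_superset_measure_eq μ S).choose_spec.2.1

theorem measure_gδHull : μ (gδHull μ S) = μ S :=
  (exists_isGδ_superset_measure_eq μ S).choose_spec.2.2

end GδHull

theorem measure_sdiff_eq_zero_of_subset_hull {α : Type*} [MeasurableSpace α] {μ : Measure α}
    {N A H : Set α} (hH : MeasurableSet H) (hNA : N ⊆ A) (hNH : N ⊆ H) (hA : μ A = μ N)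
    (hA_fin : μ A ≠ ⊤) : μ (A \ H) = 0 := by
  have hAH : μ (A ∩ H) = μ A := le_antisymm (measure_mono inter_subset_left)
    (hA.trans_le (measure_mono (subset_inter hNA hNH)))
  exact (ENNReal.add_right_inj hA_fin).mp
    ((hAH ▸ measure_inter_add_sdiff (μ := μ) A hH).trans (add_zero _).symm)

theorem volume_sUnion_eq_zero_of_mk_lt_addNull {F : Set (Set ℝ)} (hF : ∀ A ∈ F, A ∈ NullSets)
    (hcard : Cardinal.mk F < addNull) : volume (⋃₀ F) = 0 := by
  by_contra hne
  exact hcard.not_ge (csInf_le' ⟨F, hF, hne, rfl⟩)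

theorem volume_iUnion_Iio_eq_zero {α : Ordinal} (hα : α < addNull.ord) (f : Ordinal → Set ℝ)
    (hf : ∀ β < α, f β ∈ NullSets) : volume (⋃ β : Iio α, f β) = 0 := by
  rw [← sUnion_range]
  refine volume_sUnion_eq_zero_of_mk_lt_addNull (by rintro _ ⟨β, rfl⟩; exact hf β β.2) ?_
  have hrange := Cardinal.mk_range_le_lift (f := fun β : Iio α => f β)
  rw [Cardinal.mk_Iio_ordinal, Cardinal.lift_lift, Cardinal.lift_le] at hrange
  exact hrange.trans_lt (Cardinal.lt_ord.mp hα)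

def chainHull (M : Ordinal → Set ℝ) : Ordinal → Set ℝ :=
  Ordinal.lt_wf.fix fun α prev =>
    let H := gδHull volume (M α)
    (H ∪ gδHull volume ((⋃ β : Iio α, prev β β.2) \ H)) ∩ Icc 0 1

theorem chainHull_eq (M : Ordinal → Set ℝ) (α : Ordinal) :
    chainHull M α = (gδHull volume (M α) ∪
      gδHull volume ((⋃ β : Iio α, chainHull M β) \ gδHull volume (M α))) ∩ Icc 0 1 :=
  Ordinal.lt_wf.fix_eq _ α


section chainHull

variable (M : Ordinal → Set ℝ)

theorem isGδ_chainHull (α : Ordinal) : IsGδ (chainHull M α) := by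
  rw [chainHull_eq]
  exact ((isGδ_gδHull _ _).union (isGδ_gδHull _ _)).inter isClosed_Icc.isGδ

theorem chainHull_subset_Icc (α : Ordinal) : chainHull M α ⊆ Icc 0 1 := by
  rw [chainHull_eq]
  exact inter_subset_right

theorem chainHull_mono : Monotone (chainHull M) := by
  intro β α hβα x hx
  rcases hβα.eq_or_lt with rfl | hβα
  · exact hx
  rw [chainHull_eq]
  refine ⟨?_, chainHull_subset_Icc M β hx⟩
  by_cases hxH : x ∈ gδHull volume (M α)
  · exact .inl hxH
  · exact .inr (subset_gδHull _ _ ⟨mem_iUnion.2 ⟨⟨β, hβα⟩, hx⟩, hxH⟩)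

theorem chainHull_spec {ξ : Ordinal} (hξ : ξ ≤ addNull.ord) (hM : ∀ α < ξ, M α ⊆ Icc 0 1)
    (hmono : ∀ α β : Ordinal, α ≤ β → β < ξ → M α ⊆ M β) :
    ∀ α < ξ, M α ⊆ chainHull M α ∧ volume (chainHull M α) = volume (M α) := by
  intro α
  induction α using WellFoundedLT.induction with | _ α ih => ?_
  intro hα
  set H := gδHull volume (M α)
  have hMH : M α ⊆ H := subset_gδHull _ _
  have hnull : ∀ β < α, chainHull M β \ H ∈ NullSets := fun β hβ => by
    obtain ⟨hsub, hvol⟩ := ih β hβ (hβ.trans hα)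
    refine ⟨sdiff_subset.trans (chainHull_subset_Icc M β), ?_⟩
    exact measure_sdiff_eq_zero_of_subset_hull (isGδ_gδHull _ _).measurableSet hsub
      ((hmono β α hβ.le hα).trans hMH) hvol
      (measure_ne_top_of_subset (chainHull_subset_Icc M β) measure_Icc_lt_top.ne)
  have hU : volume ((⋃ β : Iio α, chainHull M β) \ H) = 0 := by
    rw [iUnion_sdiff]
    exact volume_iUnion_Iio_eq_zero (hα.trans_le hξ) _ hnull
  have hsub : M α ⊆ chainHull M α := by
    rw [chainHull_eq]
    exact subset_inter (hMH.trans subset_union_left) (hM α hα)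
  refine ⟨hsub, le_antisymm ?_ (measure_mono hsub)⟩
  calc volume (chainHull M α)
      ≤ volume (H ∪ gδHull volume ((⋃ β : Iio α, chainHull M β) \ H)) := by
        rw [chainHull_eq]
        exact measure_mono inter_subset_left
    _ ≤ volume H + volume (gδHull volume ((⋃ β : Iio α, chainHull M β) \ H)) :=
        measure_union_le _ _
    _ = volume (M α) := by rw [measure_gδHull, measure_gδHull, hU, add_zero]

end chainHull

/-- Every increasing chain of subsets of `[0,1]` of order type `ξ ≤ add(N)` admits an
increasing family of Gδ hulls. Here `volume` applied to an arbitrary set is the Lebesgue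
outer measure, and the cardinal `add(N)` is identified with its initial ordinal. -/
theorem monotone_Gdelta_hull_on_short_wellordered_chain
    (ξ : Ordinal) (hξ : ξ ≤ addNull.ord) (M : Ordinal → Set ℝ)
    (hM : ∀ α < ξ, M α ⊆ Icc (0:ℝ) 1)
    (hmono : ∀ α β : Ordinal, α ≤ β → β < ξ → M α ⊆ M β) :
    ∃ A : Ordinal → Set ℝ,
      (∀ α < ξ, IsGδ (A α) ∧ A α ⊆ Icc (0:ℝ) 1 ∧ M α ⊆ A α ∧
        volume (A α) = volume (M α)) ∧
      (∀ α β : Ordinal, α ≤ β → β < ξ → A α ⊆ A β) := by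
  refine ⟨chainHull M, fun α hα => ?_, fun α β hαβ _ => chainHull_mono M hαβ⟩
  exact ⟨isGδ_chainHull M α, chainHull_subset_Icc M α, chainHull_spec M hξ hM hmono α hα⟩
end
end

section
/- There is no strictly monotone Borel hull operation on N: there exists no map φ : N → P([0,1]) such that φ(A) is a Borel set containing A with λ*(φ(A)) = λ*(A) for every Lebesgue null A ⊆ [0,1], and A ⊊ A' implies φ(A) ⊊ φ(A'). -/
open MeasureTheory Set

noncomputable section

/-!
Let `μ` be the least cardinal with `𝔠 < 2 ^ μ`, so that `2 ^ ν ≤ 𝔠` for every `ν < μ`. Well-order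
`μ` and order `μ → Bool` lexicographically. The functions of bounded support number at most
`μ · 2 ^ {<μ} ≤ 𝔠` and are order-dense, so their initial segments form a chain of `2 ^ μ > 𝔠`
distinct sets. Transported into the Cantor set, these are null sets, and a strictly monotone `φ`
is injective on a chain, producing more than `𝔠` Borel sets.
-/

universe u

open Cardinal ENNReal

theorem volume_preCantorSet_le (n : ℕ) : volume (preCantorSet n) ≤ (2 / 3 : ℝ≥0∞) ^ n := by
  induction n with
  | zero => simp [Real.volume_Icc]
  | succ n ih =>
    have h : preCantorSet (n + 1) = AffineMap.homothety (0 : ℝ) (3⁻¹ : ℝ) '' preCantorSet n ∪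
        AffineMap.homothety (1 : ℝ) (3⁻¹ : ℝ) '' preCantorSet n := by
      rw [preCantorSet_succ]
      congr 1 <;> congr 1 <;> funext x <;> simp [AffineMap.homothety_apply] <;> ring
    calc volume (preCantorSet (n + 1))
        ≤ 3⁻¹ * volume (preCantorSet n) + 3⁻¹ * volume (preCantorSet n) := by
          rw [h]
          refine (measure_union_le _ _).trans_eq ?_
          simp [Measure.addHaar_image_homothety]
      _ = 2 / 3 * volume (preCantorSet n) := by
          rw [← add_mul, ← two_mul, ← div_eq_mul_inv]
      _ ≤ (2 / 3) ^ (n + 1) := by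
          rw [pow_succ']
          gcongr

theorem volume_cantorSet : volume cantorSet = 0 := by
  refine le_antisymm (ge_of_tendsto' (ENNReal.tendsto_pow_atTop_nhds_zero_of_lt_one ?_)
    fun n => (measure_mono (iInter_subset _ n)).trans (volume_preCantorSet_le n)) bot_le
  exact ENNReal.div_lt_of_lt_mul (by norm_num)

theorem mk_cantorSet : #cantorSet = 𝔠 := by
  rw [mk_congr cantorSetEquivNatToBool, ← power_def, mk_bool, mk_nat, two_power_aleph0]

theorem Real.mk_measurableSet_le_continuum : #{s : Set ℝ | MeasurableSet s} ≤ 𝔠 := by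
  have := MeasurableSpace.cardinal_measurableSet_le_continuum
    (s := range (Iio : ℝ → Set ℝ)) (mk_range_le.trans (by rw [mk_real]))
  rwa [← borel_eq_generateFrom_Iio] at this

section LexChain

variable {ι : Type u} [LinearOrder ι]

variable (ι) in
def boundedSupport : Set (ι → Bool) := {z | BddAbove {j | z j}}

theorem exists_mem_boundedSupport_lt_le [WellFoundedLT ι] {x y : ι → Bool}
    (h : toLex x < toLex y) : ∃ z ∈ boundedSupport ι, toLex x < toLex z ∧ z ≤ y := by
  obtain ⟨i, hagree, hlt⟩ := h
  obtain ⟨hxi, hyi⟩ : x i = false ∧ y i = true := Bool.lt_iff.1 hlt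
  refine ⟨fun j => decide (j ≤ i) && y j, ⟨i, fun j hj => by simp_all⟩, ⟨i, fun j hj => ?_, ?_⟩,
    fun j => Bool.and_le_right _ _⟩
  · simp [hagree j hj, hj.le]
  · simp [hxi, hyi]

def boundedLexIic (x : ι → Bool) : Set (boundedSupport ι) := {z | toLex z.1 ≤ toLex x}

theorem strictMono_boundedLexIic [WellFoundedLT ι] :
    StrictMono fun x : Lex (ι → Bool) => boundedLexIic (ofLex x) := by
  intro x y hxy
  obtain ⟨z, hz, hxz, hzy⟩ := exists_mem_boundedSupport_lt_le hxy
  refine ssubset_of_subset_not_subset (fun w hw => le_trans hw hxy.le) fun hyx => ?_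
  exact (hyx (show ⟨z, hz⟩ ∈ boundedLexIic (ofLex y) from Pi.toLex_monotone hzy)).not_gt hxz

theorem mk_boundedSupport_le {κ : Cardinal.{u}}
    (h : ∀ i : ι, 2 ^ #(Iic i) ≤ κ) : #(boundedSupport ι) ≤ #ι * κ := by
  have hunion : boundedSupport ι = ⋃ i, {z | ∀ j, z j → j ≤ i} := by
    ext z; simp [boundedSupport, BddAbove, upperBounds, Set.Nonempty]
  rw [hunion]
  refine (mk_iUnion_le _).trans (mul_le_mul_right (ciSup_le' fun i => ?_) _)
  have hinj : Function.Injective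
      fun (z : {z : ι → Bool | ∀ j, z j → j ≤ i}) (j : Iic i) => z.1 j := by
    intro z w hzw
    ext j
    by_cases hj : j ≤ i
    · exact congrFun hzw ⟨j, hj⟩
    · rw [Bool.eq_false_iff.2 (mt (z.2 j) hj), Bool.eq_false_iff.2 (mt (w.2 j) hj)]
  calc _ ≤ #(Iic i → Bool) := mk_le_of_injective hinj
    _ = 2 ^ #(Iic i) := by simp
    _ ≤ κ := h i

end LexChain

theorem StrictMono.injOn_of_isChain {α β : Type*} [PartialOrder α] [Preorder β] {f : α → β}
    (hf : StrictMono f) {s : Set α} (hs : IsChain (· ≤ ·) s) : InjOn f s := by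
  intro a ha b hb hab
  by_contra hne
  rcases hs ha hb hne with hle | hge
  · exact (hf (hle.lt_of_ne hne)).ne hab
  · exact (hf (hge.lt_of_ne (Ne.symm hne))).ne hab.symm

theorem Cardinal.exists_aleph0_le_lt_two_power_min {κ : Cardinal} (hκ : ℵ₀ ≤ κ) :
    ∃ μ : Cardinal, ℵ₀ ≤ μ ∧ μ ≤ κ ∧ κ < 2 ^ μ ∧ ∀ ν < μ, 2 ^ ν ≤ κ := by
  let s := {μ : Cardinal | κ < 2 ^ μ}
  have hspec : κ < 2 ^ sInf s := csInf_mem (⟨κ, cantor κ⟩ : s.Nonempty)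
  refine ⟨sInf s, not_lt.1 fun hfin => ?_, csInf_le' (cantor κ), hspec,
    fun ν hν => le_of_not_gt (notMem_of_lt_csInf' (s := s) hν)⟩
  exact (hspec.trans (power_lt_aleph0 natCast_lt_aleph0 hfin)).not_ge hκ

theorem Cardinal.exists_isChain_card_gt {S : Type u} (hS : ℵ₀ ≤ #S) :
    ∃ 𝒞 : Set (Set S), IsChain (· ⊆ ·) 𝒞 ∧ #S < #𝒞 := by
  obtain ⟨μ, hμ, hμS, hSμ, hmin⟩ := exists_aleph0_le_lt_two_power_min hS
  let ι := μ.ord.ToType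
  have hι : #ι = μ := by simp [ι]
  have hιinf : ℵ₀ ≤ #ι := hι ▸ hμ
  have hIic (i : ι) : #(Iic i) < #ι := by
    rw [← Iio_insert]
    calc #(insert i (Iio i) : Set ι) ≤ #(Iio i) + 1 := mk_insert_le
      _ < #ι := add_lt_of_lt hιinf (mk_Iio_lt i (by simp [ι])) (one_lt_aleph0.trans_le hιinf)
  have hbdd : #(boundedSupport ι) ≤ #S := by
    refine (mk_boundedSupport_le fun i => hmin _ ((hIic i).trans_eq hι)).trans ?_
    rw [hι]
    exact (mul_le_mul_left hμS _).trans (mul_eq_self hS).le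
  obtain ⟨e⟩ := hbdd
  let f : Lex (ι → Bool) → Set S := fun x => e '' boundedLexIic (ofLex x)
  have hf : StrictMono f := e.injective.image_strictMono.comp strictMono_boundedLexIic
  refine ⟨range f, hf.monotone.isChain_range, ?_⟩
  rw [mk_range_eq f hf.injective, mk_congr toLex.symm]
  simpa [hι] using hSμ

/-- There is no strictly monotone Borel hull operation on `N`: no map assigning to each
null `A ⊆ [0,1]` a Borel hull `φ(A) ⊆ [0,1]` such that `A ⊊ A'` implies `φ(A) ⊊ φ(A')`.
Here `volume` applied to an arbitrary set is the Lebesgue outer measure. -/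
theorem no_strictly_monotone_borel_hull_on_null :
    ¬ ∃ φ : Set ℝ → Set ℝ,
      (∀ A ∈ NullSets, MeasurableSet (φ A) ∧ φ A ⊆ Icc (0:ℝ) 1 ∧ A ⊆ φ A ∧
        volume (φ A) = volume A) ∧
      (∀ A ∈ NullSets, ∀ A' ∈ NullSets, A ⊂ A' → φ A ⊂ φ A') := by
  rintro ⟨φ, hhull, hstrict⟩
  obtain ⟨𝒞, h𝒞, hcard⟩ :=
    exists_isChain_card_gt (S := cantorSet) (mk_cantorSet ▸ aleph0_le_continuum)
  have hnull (A : Set cantorSet) : ((↑) '' A : Set ℝ) ∈ NullSets :=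
    ⟨(image_subset_range _ _).trans (by simpa using cantorSet_subset_unitInterval),
      measure_mono_null (by simp) volume_cantorSet⟩
  let ψ : Set cantorSet → Set ℝ := fun A => φ ((↑) '' A)
  have hψ : StrictMono ψ := fun A B hAB =>
    hstrict _ (hnull A) _ (hnull B) (Subtype.val_injective.image_strictMono hAB)
  have hborel : #𝒞 ≤ 𝔠 :=
    calc #𝒞 = #(ψ '' 𝒞) := (mk_image_eq_of_injOn _ _ (hψ.injOn_of_isChain h𝒞)).symm
      _ ≤ #{t : Set ℝ | MeasurableSet t} :=
          mk_le_mk_of_subset (by rintro _ ⟨A, -, rfl⟩; exact (hhull _ (hnull A)).1)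
      _ ≤ 𝔠 := Real.mk_measurableSet_le_continuum
  exact (hcard.trans_le hborel).ne mk_cantorSet
end
end
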